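/- Let R be a commutative ring with 2 invertible, V an R-module, B : V × V → V bilinear, and define the group operation x * y = x + y + B(x,y) on elements of V, with bracket [x,y] = B(x,y) - B(y,x). Suppose x, y ∈ V satisfy all third-order vanishing conditions (every application of B to a value B(u,v), u,v ∈ {x,y}, with an element of {x,y}, and every B of two such values, vanishes). Then conjugation is given by the adjoint formula: x * y * inv(x) = y + [x,y], where inv(x) = -x + B(x,x). -/
import Mathlib


theorem stmt_14 {R V : Type*} [CommRing R] [Invertible (2 : R)]
    [AddCommGroup V] [Module R V]
    (B : V →ₗ[R] V →ₗ[R] V)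
    (mul : V → V → V) (hmul : ∀ a b : V, mul a b = a + b + B a b)
    (inv : V → V) (hinv : ∀ a : V, inv a = -a + B a a)
    (bracket : V → V → V) (hbr : ∀ a b : V, bracket a b = B a b - B b a)
    (x y : V)
    (h : ∀ u v w : V, (u = x ∨ u = y) → (v = x ∨ v = y) → (w = x ∨ w = y) →
      B (B u v) w = 0 ∧ B w (B u v) = 0)
    (h2 : ∀ u v u' v' : V, (u = x ∨ u = y) → (v = x ∨ v = y) →
      (u' = x ∨ u' = y) → (v' = x ∨ v' = y) → B (B u v) (B u' v') = 0) :
    mul (mul x y) (inv x) = y + bracket x y := by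
  simp only [hmul, hinv, hbr, map_add, map_neg, map_sub, LinearMap.add_apply,
    LinearMap.neg_apply, LinearMap.map_neg, LinearMap.map_add]
  have hx : x = x ∨ x = y := Or.inl rfl
  have hy : y = x ∨ y = y := Or.inr rfl
  have h1 := (h x y x hx hy hx).1
  have h2' := (h x y x hx hy hx).2
  have h3 := (h x x x hx hx hx).1
  have h4 := (h x x x hx hx hx).2
  have h5 := (h x y y hx hy hy).2
  have h6 := (h x x y hx hx hy).2
  have h7 := h2 x y x x hx hy hx hx
  have h8 := h2 x x x y hx hx hx hy
  have h9 := h2 x x x x hx hx hx hx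
  rw [h1, h4, h6, h7]
  abel
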